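/- If G is a connected graph on at least 4 vertices that is not complete, then μ₅(G) ≥ 3, and equality holds if and only if the clique number of G is at least 4 or the diameter of G is at least 3. -/

import Mathlib

open Matrix SimpleGraph

/-- `x` is a (unit-normalizable) Pareto eigenvector of `A` associated with `lam`:
`x` is nonzero, entrywise nonnegative, `A x ≥ lam • x` entrywise, and
`lam = xᵀAx / xᵀx`. -/
def IsParetoEigenpair {n : ℕ} (A : Matrix (Fin n) (Fin n) ℝ) (lam : ℝ) (x : Fin n → ℝ) : Prop :=
  x ≠ 0 ∧ (∀ i, 0 ≤ x i) ∧ (∀ i, lam * x i ≤ A.mulVec x i) ∧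
    lam = (x ⬝ᵥ A.mulVec x) / (x ⬝ᵥ x)

/-- `lam` is a Pareto eigenvalue of `A`. -/
def IsParetoEigenvalue {n : ℕ} (A : Matrix (Fin n) (Fin n) ℝ) (lam : ℝ) : Prop :=
  ∃ x, IsParetoEigenpair A lam x

/-- The distance matrix of a graph on `Fin n`, as a real matrix. -/
noncomputable def distMatrix {n : ℕ} (G : SimpleGraph (Fin n)) : Matrix (Fin n) (Fin n) ℝ :=
  fun i j => (G.dist i j : ℝ)

/-- The set `Π(G)` of distance Pareto eigenvalues of `G`. -/
def distParetoSet {n : ℕ} (G : SimpleGraph (Fin n)) : Set ℝ :=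
  {lam | IsParetoEigenvalue (distMatrix G) lam}

/-- `a` is the `k`-th largest element of the (finite) set `S`. -/
def IsKthLargest (S : Set ℝ) (k : ℕ) (a : ℝ) : Prop :=
  a ∈ S ∧ {x ∈ S | a < x}.ncard = k - 1

/-- `a` is the `k`-th smallest element of the (finite) set `S`. -/
def IsKthSmallest (S : Set ℝ) (k : ℕ) (a : ℝ) : Prop :=
  a ∈ S ∧ {x ∈ S | x < a}.ncard = k - 1

/-- The star graph `S_n` on `n` vertices: vertex `0` is adjacent to all others. -/
def starGraph (n : ℕ) : SimpleGraph (Fin n) where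
  Adj i j := i ≠ j ∧ (i.val = 0 ∨ j.val = 0)
  symm := ⟨fun i j h => ⟨h.1.symm, h.2.symm⟩⟩
  loopless := ⟨fun i h => h.1 rfl⟩

/-- The graph `S_n⁺`: the star `S_n` plus one edge between the pendant vertices `1` and `2`. -/
def starPlusGraph (n : ℕ) : SimpleGraph (Fin n) where
  Adj i j := i ≠ j ∧
    ((i.val = 0 ∨ j.val = 0) ∨ (i.val = 1 ∧ j.val = 2) ∨ (i.val = 2 ∧ j.val = 1))
  symm := ⟨fun i j h => ⟨h.1.symm, by tauto⟩⟩
  loopless := ⟨fun i h => h.1 rfl⟩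

/-- The wheel graph `W_n` on `n` vertices: hub `0` joined to the cycle `1 - 2 - ⋯ - (n-1) - 1`. -/
def wheelGraph (n : ℕ) : SimpleGraph (Fin n) where
  Adj i j := i ≠ j ∧ (i.val = 0 ∨ j.val = 0 ∨
    i.val + 1 = j.val ∨ j.val + 1 = i.val ∨
    (i.val = 1 ∧ j.val = n - 1) ∨ (j.val = 1 ∧ i.val = n - 1))
  symm := ⟨fun i j h => ⟨h.1.symm, by tauto⟩⟩
  loopless := ⟨fun i h => h.1 rfl⟩

/-- `K₄ - e`: the complete graph on 4 vertices minus the edge `{0,1}`. -/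
def k4MinusE : SimpleGraph (Fin 4) where
  Adj i j := i ≠ j ∧ ¬((i.val = 0 ∧ j.val = 1) ∨ (i.val = 1 ∧ j.val = 0))
  symm := ⟨fun i j h => ⟨h.1.symm, by tauto⟩⟩
  loopless := ⟨fun i h => h.1 rfl⟩

/-- `C₃ * C₃`: two triangles `{0,1,2}` and `{0,3,4}` glued at the common vertex `0`. -/
def c3c3Graph : SimpleGraph (Fin 5) where
  Adj i j := i ≠ j ∧ (i.val = 0 ∨ j.val = 0 ∨
    (i.val ≤ 2 ∧ j.val ≤ 2) ∨ (3 ≤ i.val ∧ 3 ≤ j.val))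
  symm := ⟨fun i j h => ⟨h.1.symm, by tauto⟩⟩
  loopless := ⟨fun i h => h.1 rfl⟩



/-!
If `(lam, x)` is a Pareto eigenpair of `D = D(G)`, then `x` is a positive eigenvector of the
principal submatrix `D[S]` on its support `S`. Since the off-diagonal entries of `D` are at
least `1`, comparing with the smallest entry of `x` gives `lam ≥ |S| - 1`, so a Pareto eigenvalue
`lam ≤ 3` has `|S| ≤ 4`: `|S| = 1` gives `0`, `|S| = 2` a distance, `|S| = 3` a root of
`lam³ = (a² + b² + c²) lam + 2abc` for the distances `a, b, c`, hence `2` or `1 + √3`, and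
`|S| = 4` forces `lam = 3` with `S` a 4-clique.

In a connected non-complete graph a vertex, an edge, two vertices at distance `2` and an induced
path `a - u - w` with weights `1, √3 - 1, 1` realise `0, 1, 2, 1 + √3`, while a maximiser of the
Rayleigh quotient, made nonnegative, is a Pareto eigenvector with eigenvalue at least
`n - 1 ≥ 3`. Since `Π(G)` is finite, `μ₅` is the least element of `Π(G)` in `[3, ∞)`, and it
equals `3` iff `3 ∈ Π(G)`, i.e. iff `G` has a 4-clique or two vertices at distance `3`.
-/

namespace SimpleGraph

variable {V : Type*} {G : SimpleGraph V}

lemma Reachable.exists_dist_eq_of_le_dist {u v : V} (hr : G.Reachable u v) {k : ℕ}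
    (hk : k ≤ G.dist u v) : ∃ w, G.dist u w = k := by
  obtain ⟨p, hp⟩ := hr.exists_walk_length_eq_dist
  refine ⟨p.getVert k, ?_⟩
  rw [← length_eq_dist_of_subwalk hp (p.isSubwalk_take k), Walk.take_length, hp]
  exact min_eq_left hk

lemma Connected.exists_dist_eq_iff_le_diam [Finite V] (hG : G.Connected) {k : ℕ} :
    (∃ u v, G.dist u v = k) ↔ k ≤ G.diam := by
  have := hG.nonempty
  constructor
  · rintro ⟨u, v, rfl⟩
    exact dist_le_diam (connected_iff_ediam_ne_top.1 hG)
  · intro hk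
    obtain ⟨u, v, huv⟩ := G.exists_dist_eq_diam
    exact ⟨u, (hG u v).exists_dist_eq_of_le_dist (huv ▸ hk)⟩

lemma Connected.exists_adj_adj_dist_eq_two (hG : G.Connected) (hG' : G ≠ ⊤) :
    ∃ a u w, G.Adj a u ∧ G.Adj u w ∧ G.dist a w = 2 := by
  obtain ⟨u, v, huv, hadj⟩ : ∃ u v, u ≠ v ∧ ¬G.Adj u v := by
    by_contra! h
    exact hG' (eq_top_iff.2 fun u v huv => h u v huv)
  obtain ⟨p, hp⟩ := hG.exists_walk_length_eq_dist u v
  obtain ⟨a, u, w, hau, huw, haw, hne⟩ :=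
    p.exists_adj_adj_not_adj_ne hp (hG.one_lt_dist_of_ne_of_not_adj huv hadj)
  refine ⟨a, u, w, hau, huw, le_antisymm ?_ (hG.one_lt_dist_of_ne_of_not_adj hne haw)⟩
  simpa using dist_le ((Walk.nil.cons huw).cons hau)

lemma le_cliqueNum_iff_exists_isNClique [Finite V] {k : ℕ} :
    k ≤ G.cliqueNum ↔ ∃ s, G.IsNClique k s := by
  refine ⟨fun hk => ?_, fun ⟨s, hs⟩ => hs.card_eq ▸ hs.isClique.card_le_cliqueNum⟩
  obtain ⟨s, hs⟩ := G.exists_isNClique_cliqueNum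
  obtain ⟨t, hts, rfl⟩ := Finset.exists_subset_card_eq (hs.card_eq ▸ hk)
  exact ⟨t, ⟨hs.isClique.subset (Finset.coe_subset.2 hts), rfl⟩⟩

end SimpleGraph

lemma exists_isKthSmallest_of_ncard_lt {S : Set ℝ} (hS : S.Finite) {t : ℝ} {k : ℕ}
    (hlt : {x ∈ S | x < t}.ncard = k - 1) (hge : ∃ x ∈ S, t ≤ x) :
    ∃ a, IsKthSmallest S k a ∧ t ≤ a ∧ (a = t ↔ t ∈ S) := by
  obtain ⟨a, ⟨haS, hta⟩, hmin⟩ := Set.exists_min_image (S ∩ Set.Ici t) id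
    (hS.subset Set.inter_subset_left) hge
  have hbelow : {x ∈ S | x < a} = {x ∈ S | x < t} := by
    ext x
    refine ⟨fun ⟨hx, hxa⟩ => ⟨hx, ?_⟩, fun ⟨hx, hxt⟩ => ⟨hx, hxt.trans_le hta⟩⟩
    by_contra! htx
    exact (hmin x ⟨hx, htx⟩).not_gt hxa
  refine ⟨a, ⟨haS, hbelow ▸ hlt⟩, hta, ⟨fun h => h ▸ haS, fun ht => ?_⟩⟩
  exact le_antisymm (hmin t ⟨ht, Set.self_mem_Ici⟩) hta

section PrincipalSubmatrix

open Finset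

variable {ι : Type*} {A : Matrix ι ι ℝ} {S : Finset ι} {lam : ℝ} {x : ι → ℝ}

def IsPosEigenOn (A : Matrix ι ι ℝ) (S : Finset ι) (lam : ℝ) (x : ι → ℝ) : Prop :=
  (∀ i ∈ S, 0 < x i) ∧ ∀ i ∈ S, ∑ j ∈ S, A i j * x j = lam * x i

namespace IsPosEigenOn

lemma sub_nonneg_of_le (h : IsPosEigenOn A S lam x) (hoff : ∀ i j, i ≠ j → 1 ≤ A i j)
    {i j : ι} (hj : j ∈ S) (hij : i ≠ j) (hle : x i ≤ x j) : 0 ≤ A i j * x j - x i := by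
  nlinarith [h.1 j hj, hoff i j hij]

variable [DecidableEq ι]

lemma sum_erase_sub_eq (h : IsPosEigenOn A S lam x) (hdiag : ∀ i, A i i = 0) {i : ι}
    (hi : i ∈ S) : ∑ j ∈ S.erase i, (A i j * x j - x i) = (lam - (#S - 1)) * x i := by
  rw [sum_sub_distrib, sum_erase _ (by rw [hdiag, zero_mul]), h.2 i hi, sum_const,
    card_erase_of_mem hi, nsmul_eq_mul, Nat.cast_pred (card_pos.2 ⟨i, hi⟩)]
  ring

lemma eq_zero_of_card_eq_one (h : IsPosEigenOn A S lam x) (hdiag : ∀ i, A i i = 0)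
    (hS : #S = 1) : lam = 0 := by
  obtain ⟨i, rfl⟩ := card_eq_one.1 hS
  have := h.sum_erase_sub_eq hdiag (mem_singleton_self i)
  simp only [erase_singleton, sum_empty, card_singleton, Nat.cast_one, sub_self, sub_zero] at this
  exact (mul_eq_zero.1 this.symm).resolve_right (h.1 i (mem_singleton_self i)).ne'

lemma card_sub_one_le (h : IsPosEigenOn A S lam x) (hdiag : ∀ i, A i i = 0)
    (hoff : ∀ i j, i ≠ j → 1 ≤ A i j) (hS : S.Nonempty) : (#S : ℝ) - 1 ≤ lam := by
  obtain ⟨i, hi, hmin⟩ := S.exists_min_image x hS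
  have hsum : 0 ≤ ∑ j ∈ S.erase i, (A i j * x j - x i) := sum_nonneg fun j hj =>
    h.sub_nonneg_of_le hoff (mem_of_mem_erase hj) (ne_of_mem_erase hj).symm
      (hmin j (mem_of_mem_erase hj))
  rw [h.sum_erase_sub_eq hdiag hi] at hsum
  nlinarith [h.1 i hi]

lemma mul_eq_of_eq_card_sub_one (h : IsPosEigenOn A S lam x) (hdiag : ∀ i, A i i = 0)
    (hoff : ∀ i j, i ≠ j → 1 ≤ A i j) (hlam : lam = #S - 1) {i j : ι} (hi : i ∈ S)
    (hmin : ∀ l ∈ S, x i ≤ x l) (hj : j ∈ S) (hij : i ≠ j) : A i j * x j = x i := by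
  have hterm : ∀ l ∈ S.erase i, 0 ≤ A i l * x l - x i := fun l hl =>
    h.sub_nonneg_of_le hoff (mem_of_mem_erase hl) (ne_of_mem_erase hl).symm
      (hmin l (mem_of_mem_erase hl))
  have := (sum_eq_zero_iff_of_nonneg hterm).1
    (by rw [h.sum_erase_sub_eq hdiag hi, hlam, sub_self, zero_mul]) j
    (mem_erase.2 ⟨hij.symm, hj⟩)
  linarith

lemma eq_one_of_eq_card_sub_one (h : IsPosEigenOn A S lam x) (hdiag : ∀ i, A i i = 0)
    (hoff : ∀ i j, i ≠ j → 1 ≤ A i j) (hlam : lam = #S - 1) {i j : ι} (hi : i ∈ S)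
    (hj : j ∈ S) (hij : i ≠ j) : A i j = 1 := by
  obtain ⟨k, hk, hmin⟩ := S.exists_min_image x ⟨i, hi⟩
  have hconst : ∀ l ∈ S, x l = x k := fun l hl => by
    by_cases hlk : l = k
    · rw [hlk]
    · have := h.mul_eq_of_eq_card_sub_one hdiag hoff hlam hk hmin hl (Ne.symm hlk)
      nlinarith [hmin l hl, h.1 l hl, hoff k l (Ne.symm hlk)]
  have := h.mul_eq_of_eq_card_sub_one hdiag hoff hlam hi
    (fun l hl => by rw [hconst l hl, hconst i hi]) hj hij
  rw [hconst j hj, hconst i hi] at this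
  nlinarith [h.1 k hk]

lemma eq_of_pair {i j : ι} (h : IsPosEigenOn A {i, j} lam x) (hdiag : ∀ i, A i i = 0)
    (hA : A.IsSymm) (hij : i ≠ j) : lam = A i j := by
  have hi := h.2 i (by simp)
  have hj := h.2 j (by simp)
  rw [sum_pair hij, hdiag] at hi hj
  have hxi := h.1 i (by simp)
  have hxj := h.1 j (by simp)
  rw [hA.apply i j] at hj
  nlinarith

lemma cubic_of_triple {i j k : ι} (h : IsPosEigenOn A {i, j, k} lam x) (hdiag : ∀ i, A i i = 0)
    (hA : A.IsSymm) (hij : i ≠ j) (hik : i ≠ k) (hjk : j ≠ k) :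
    lam ^ 3 = (A i j ^ 2 + A i k ^ 2 + A j k ^ 2) * lam + 2 * A i j * A i k * A j k := by
  have hsum : ∀ f : ι → ℝ, ∑ l ∈ {i, j, k}, f l = f i + f j + f k := fun f => by
    rw [sum_insert (by simp [hij, hik]), sum_pair hjk, add_assoc]
  have e₁ := h.2 i (by simp)
  have e₂ := h.2 j (by simp)
  have e₃ := h.2 k (by simp)
  rw [hsum, hdiag] at e₁ e₂ e₃
  rw [hA.apply i j] at e₂
  rw [hA.apply i k, hA.apply j k] at e₃
  have hcubic : (lam ^ 3 - (A i j ^ 2 + A i k ^ 2 + A j k ^ 2) * lam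
      - 2 * A i j * A i k * A j k) * x i = 0 := by
    linear_combination (A j k ^ 2 - lam ^ 2) * e₁ - (lam * A i j + A i k * A j k) * e₂
      - (lam * A i k + A i j * A j k) * e₃
  linarith [(mul_eq_zero.1 hcubic).resolve_right (h.1 i (by simp)).ne']

end IsPosEigenOn

end PrincipalSubmatrix

lemma eq_two_or_eq_one_add_sqrt_three_of_cubic {a b c : ℕ} (ha : 1 ≤ a) (hb : 1 ≤ b)
    (hc : 1 ≤ c) {lam : ℝ} (h0 : 0 ≤ lam) (h3 : lam ≤ 3)
    (h : lam ^ 3 = (a ^ 2 + b ^ 2 + c ^ 2) * lam + 2 * a * b * c) :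
    lam = 2 ∨ lam = 1 + √3 := by
  have habc : (1 : ℝ) ≤ a * b * c := by exact_mod_cast Nat.one_le_iff_ne_zero.2 (by positivity)
  -- on `[0, 3]` we have `lam ^ 3 ≤ 9 * lam`, and the constant term `2abc` is positive
  have hsq : a ^ 2 + b ^ 2 + c ^ 2 < 9 := by
    by_contra! hge
    have hge : (9 : ℝ) ≤ a ^ 2 + b ^ 2 + c ^ 2 := by exact_mod_cast hge
    nlinarith [mul_nonneg (mul_nonneg h0 (sub_nonneg.2 h3)) (by linarith : 0 ≤ 3 + lam),
      mul_nonneg (sub_nonneg.2 hge) h0]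
  have hcases : ((a ^ 2 + b ^ 2 + c ^ 2 : ℝ) = 3 ∧ (a * b * c : ℝ) = 1) ∨
      ((a ^ 2 + b ^ 2 + c ^ 2 : ℝ) = 6 ∧ (a * b * c : ℝ) = 2) := by
    have : a ≤ 2 := by nlinarith
    have : b ≤ 2 := by nlinarith
    have : c ≤ 2 := by nlinarith
    interval_cases a <;> interval_cases b <;> interval_cases c <;> norm_num at hsq <;> norm_num
  rcases hcases with ⟨hs, hp⟩ | ⟨hs, hp⟩
  · have : (lam - 2) * (lam + 1) ^ 2 = 0 := by linear_combination h + lam * hs + 2 * hp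
    exact .inl (by nlinarith [(mul_eq_zero.1 this).resolve_right (by positivity)])
  · have : (lam - 1 - √3) * ((lam + 2) * (lam - 1 + √3)) = 0 := by
      linear_combination
        h + lam * hs + 2 * hp - (lam + 2) * Real.sq_sqrt (zero_le_three (α := ℝ))
    have hs3 : 1 < √3 := by rw [Real.lt_sqrt zero_le_one]; norm_num
    have hpos : (lam + 2) * (lam - 1 + √3) ≠ 0 := (mul_pos (by linarith) (by linarith)).ne'
    exact .inr (by linarith [(mul_eq_zero.1 this).resolve_right hpos])

section ParetoEigenpair

variable {n : ℕ} {A : Matrix (Fin n) (Fin n) ℝ} {lam : ℝ} {x : Fin n → ℝ}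

lemma dotProduct_mulVec_sub_eq_sum {ι : Type*} [Fintype ι] (A : Matrix ι ι ℝ) (lam : ℝ)
    (x : ι → ℝ) :
    x ⬝ᵥ A *ᵥ x - lam * (x ⬝ᵥ x) = ∑ i, x i * ((A *ᵥ x) i - lam * x i) := by
  simp only [dotProduct, Finset.mul_sum, ← Finset.sum_sub_distrib]
  exact Finset.sum_congr rfl fun i _ => by ring

lemma IsParetoEigenpair.mulVec_apply_eq (h : IsParetoEigenpair A lam x) {i : Fin n}
    (hi : x i ≠ 0) : (A *ᵥ x) i = lam * x i := by
  obtain ⟨hx, hx0, hge, hlam⟩ := h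
  have hxx : x ⬝ᵥ x ≠ 0 := by simpa [dotProduct_self_eq_zero] using hx
  have hsum : ∑ i, x i * ((A *ᵥ x) i - lam * x i) = 0 := by
    rw [← dotProduct_mulVec_sub_eq_sum, hlam, div_mul_cancel₀ _ hxx, sub_self]
  have := (Finset.sum_eq_zero_iff_of_nonneg fun j _ =>
    mul_nonneg (hx0 j) (sub_nonneg.2 (hge j))).1 hsum i (Finset.mem_univ i)
  linarith [(mul_eq_zero.1 this).resolve_left hi]

lemma IsParetoEigenpair.isPosEigenOn_support (h : IsParetoEigenpair A lam x) :
    IsPosEigenOn A {i | x i ≠ 0} lam x := by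
  refine ⟨fun i hi => (h.2.1 i).lt_of_ne (Finset.mem_filter.1 hi).2.symm, fun i hi => ?_⟩
  rw [← h.mulVec_apply_eq (Finset.mem_filter.1 hi).2, Finset.sum_filter]
  exact Finset.sum_congr rfl fun j _ => by split_ifs with hj <;> simp_all

lemma isParetoEigenpair_of_mulVec_apply_eq (hA : ∀ i j, 0 ≤ A i j) (hx : x ≠ 0)
    (hx0 : ∀ i, 0 ≤ x i) (h : ∀ i, x i ≠ 0 → (A *ᵥ x) i = lam * x i) :
    IsParetoEigenpair A lam x := by
  have hterm : ∀ i, x i * ((A *ᵥ x) i - lam * x i) = 0 := fun i => by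
    by_cases hi : x i = 0
    · rw [hi, zero_mul]
    · rw [h i hi, sub_self, mul_zero]
  have hxx : x ⬝ᵥ x ≠ 0 := by simpa [dotProduct_self_eq_zero] using hx
  refine ⟨hx, hx0, fun i => ?_, ?_⟩
  · by_cases hi : x i = 0
    · rw [hi, mul_zero]
      exact dotProduct_nonneg_of_nonneg (hA i) hx0
    · rw [h i hi]
  · have := dotProduct_mulVec_sub_eq_sum A lam x
    rw [Finset.sum_eq_zero fun i _ => hterm i, sub_eq_zero] at this
    rw [this, mul_div_cancel_right₀ _ hxx]

lemma setOf_isParetoEigenvalue_finite (A : Matrix (Fin n) (Fin n) ℝ) :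
    {lam | IsParetoEigenvalue A lam}.Finite := by
  classical
  let B (J : Finset (Fin n)) : Matrix (Fin n) (Fin n) ℝ :=
    .of fun i j => if i ∈ J then A i j else 0
  refine (Set.finite_iUnion fun J =>
    Module.End.finite_hasEigenvalue (Matrix.toLin' (B J))).subset ?_
  rintro lam ⟨x, hx⟩
  -- `lam` is an eigenvalue of `A` with the rows outside the support of `x` replaced by zero
  refine Set.mem_iUnion.2 ⟨({i | x i ≠ 0} : Finset (Fin n)),
    Module.End.hasEigenvalue_of_hasEigenvector
      ⟨Module.End.mem_eigenspace_iff.2 (funext fun i => ?_), hx.1⟩⟩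
  rw [Matrix.toLin'_apply, Pi.smul_apply, smul_eq_mul]
  by_cases hi : x i = 0
  · simp [B, mulVec, dotProduct, hi]
  · simpa [B, mulVec, dotProduct, hi] using hx.mulVec_apply_eq hi

open WithLp in
lemma exists_isParetoEigenvalue_ge_rayleigh (hA : A.IsSymm) (hA0 : ∀ i j, 0 ≤ A i j)
    {v : Fin n → ℝ} (hv : v ≠ 0) :
    ∃ lam, IsParetoEigenvalue A lam ∧ v ⬝ᵥ A *ᵥ v / (v ⬝ᵥ v) ≤ lam := by
  let T := Matrix.toEuclideanCLM (𝕜 := ℝ) A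
  have hT : IsSelfAdjoint T := by
    refine IsSelfAdjoint.map ?_ Matrix.toEuclideanCLM
    rw [IsSelfAdjoint, star_eq_conjTranspose, conjTranspose_eq_transpose_of_trivial, hA]
  have hq : ∀ y, T.reApplyInnerSelf y = ofLp y ⬝ᵥ A *ᵥ ofLp y := fun y => by
    rw [ContinuousLinearMap.reApplyInnerSelf_apply, RCLike.re_to_real, real_inner_comm]
    exact Matrix.inner_toEuclideanCLM A y y
  have hnorm : ∀ y : EuclideanSpace ℝ (Fin n), ‖y‖ ^ 2 = ofLp y ⬝ᵥ ofLp y := fun y => by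
    rw [← real_inner_self_eq_norm_sq, EuclideanSpace.inner_eq_star_dotProduct]
    rfl
  obtain ⟨x₀, hx₀, hmax⟩ :=
    (isCompact_sphere (0 : EuclideanSpace ℝ (Fin n)) ‖toLp 2 v‖).exists_isMaxOn
      ⟨toLp 2 v, by simp⟩ T.reApplyInnerSelf_continuous.continuousOn
  -- replacing `x₀` by its entrywise absolute value keeps the norm and can only increase the form
  let y : EuclideanSpace ℝ (Fin n) := toLp 2 fun i => |x₀ i|
  have hy : ‖y‖ = ‖toLp 2 v‖ := by
    rw [← mem_sphere_zero_iff_norm.1 hx₀, EuclideanSpace.norm_eq, EuclideanSpace.norm_eq]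
    simp [y]
  have hqy : T.reApplyInnerSelf x₀ ≤ T.reApplyInnerSelf y := by
    simp only [hq, dotProduct, mulVec, Finset.mul_sum]
    refine Finset.sum_le_sum fun i _ => Finset.sum_le_sum fun j _ => ?_
    calc x₀ i * (A i j * x₀ j) ≤ |x₀ i * (A i j * x₀ j)| := le_abs_self _
      _ = |x₀ i| * (A i j * |x₀ j|) := by rw [abs_mul, abs_mul, abs_of_nonneg (hA0 i j)]
  have hymax : IsMaxOn T.reApplyInnerSelf (Metric.sphere 0 ‖y‖) y := fun z hz =>
    (hmax (hy ▸ hz)).trans hqy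
  have hAy : A *ᵥ ofLp y = T.rayleighQuotient y • ofLp y := by
    rw [← Matrix.ofLp_toEuclideanCLM]
    exact congrArg ofLp (hT.eq_smul_self_of_isLocalExtrOn (Or.inr hymax.localize))
  have hv' : ‖toLp 2 v‖ ≠ 0 := by simpa using hv
  refine ⟨T.rayleighQuotient y, ⟨ofLp y, isParetoEigenpair_of_mulVec_apply_eq hA0 ?_
    (fun i => abs_nonneg _) fun i _ => congrFun hAy i⟩, ?_⟩
  · intro h0
    apply hv'
    rw [← hy, show y = 0 from congrArg (toLp 2) h0, norm_zero]
  · rw [ContinuousLinearMap.rayleighQuotient, ← hq (toLp 2 v), ← hnorm (toLp 2 v), ← hy]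
    exact div_le_div_of_nonneg_right (hymax (by simp [hy])) (sq_nonneg _)

end ParetoEigenpair

section DistanceMatrix

open Finset

variable {n : ℕ} {G : SimpleGraph (Fin n)} {lam : ℝ}

@[simp]
lemma distMatrix_apply (G : SimpleGraph (Fin n)) (i j : Fin n) :
    distMatrix G i j = G.dist i j := rfl

lemma distMatrix_isSymm (G : SimpleGraph (Fin n)) : (distMatrix G).IsSymm :=
  Matrix.IsSymm.ext fun i j => by simp [dist_comm]

lemma distMatrix_nonneg (G : SimpleGraph (Fin n)) (i j : Fin n) : 0 ≤ distMatrix G i j :=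
  Nat.cast_nonneg _

lemma distMatrix_self (G : SimpleGraph (Fin n)) (i : Fin n) : distMatrix G i i = 0 := by simp

lemma SimpleGraph.Connected.one_le_distMatrix (hG : G.Connected) {i j : Fin n} (hij : i ≠ j) :
    1 ≤ distMatrix G i j :=
  Nat.one_le_cast.2 (hG.pos_dist_of_ne hij)

lemma mem_distParetoSet_of_mulVec_apply_eq {x : Fin n → ℝ} (hx : x ≠ 0)
    (hx0 : ∀ i, 0 ≤ x i) (h : ∀ i, x i ≠ 0 → (distMatrix G *ᵥ x) i = lam * x i) :
    lam ∈ distParetoSet G :=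
  ⟨x, isParetoEigenpair_of_mulVec_apply_eq (distMatrix_nonneg G) hx hx0 h⟩

lemma SimpleGraph.IsNClique.natCast_mem_distParetoSet {k : ℕ} {s : Finset (Fin n)}
    (hs : G.IsNClique (k + 1) s) : (k : ℝ) ∈ distParetoSet G := by
  classical
  obtain ⟨i₀, hi₀⟩ : s.Nonempty := card_pos.1 (by rw [hs.card_eq]; omega)
  refine mem_distParetoSet_of_mulVec_apply_eq (x := fun i => if i ∈ s then 1 else 0)
    (fun h0 => by simpa [hi₀] using congrFun h0 i₀) (fun i => by positivity) fun i hi => ?_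
  have hi : i ∈ s := by simpa using hi
  simp only [mulVec, dotProduct, distMatrix_apply, mul_ite, mul_one, mul_zero, sum_ite_mem,
    univ_inter, hi, if_true]
  rw [← sum_erase_add _ _ hi, dist_self, Nat.cast_zero, add_zero,
    sum_congr rfl fun j hj => by rw [dist_eq_one_iff_adj.2 (hs.isClique hi
      (mem_of_mem_erase hj) (ne_of_mem_erase hj).symm), Nat.cast_one],
    sum_const, card_erase_of_mem hi, hs.card_eq]
  simp

lemma natCast_dist_mem_distParetoSet {u v : Fin n} (huv : u ≠ v) :
    (G.dist u v : ℝ) ∈ distParetoSet G := by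
  refine mem_distParetoSet_of_mulVec_apply_eq (x := Pi.single u 1 + Pi.single v 1)
    (fun h0 => by simpa [huv] using congrFun h0 u) (fun i => ?_) fun i hi => ?_
  · simp only [Pi.add_apply, Pi.single_apply]
    positivity
  · have : i = u ∨ i = v := by
      by_contra! h
      simp [h.1, h.2] at hi
    rcases this with rfl | rfl <;> simp [mulVec_add, huv, huv.symm, dist_comm]

lemma one_add_sqrt_three_mem_distParetoSet {a u w : Fin n} (hau : G.Adj a u) (huw : G.Adj u w)
    (haw : G.dist a w = 2) : 1 + √3 ∈ distParetoSet G := by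
  have haw' : a ≠ w := by rintro rfl; simp at haw
  have hs3 : 1 < √3 := by rw [Real.lt_sqrt zero_le_one]; norm_num
  -- the Perron vector `(1, √3 - 1, 1)` of the distance matrix of the path `a - u - w`
  refine mem_distParetoSet_of_mulVec_apply_eq
    (x := Pi.single a 1 + Pi.single w 1 + Pi.single u (√3 - 1))
    (fun h0 => by simpa [haw', hau.ne] using congrFun h0 a) (fun i => ?_) fun i hi => ?_
  · simp only [Pi.add_apply, Pi.single_apply]
    split_ifs <;> linarith
  · have : i = a ∨ i = w ∨ i = u := by
      by_contra! h
      simp [h.1, h.2.1, h.2.2] at hi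
    rcases this with rfl | rfl | rfl
    · simp [mulVec_add, haw', hau.ne, dist_eq_one_iff_adj.2 hau, haw]
      ring
    · simp [mulVec_add, haw', huw.ne.symm, dist_comm, dist_eq_one_iff_adj.2 huw, haw]
      ring
    · simp [mulVec_add, hau.ne.symm, huw.ne, dist_eq_one_iff_adj.2 hau.symm,
        dist_eq_one_iff_adj.2 huw]
      nlinarith [Real.sq_sqrt (zero_le_three (α := ℝ))]

lemma SimpleGraph.Connected.eq_two_or_eq_one_add_sqrt_three_of_isPosEigenOn (hG : G.Connected)
    {x : Fin n → ℝ} {i j k : Fin n} (h : IsPosEigenOn (distMatrix G) {i, j, k} lam x)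
    (hij : i ≠ j) (hik : i ≠ k) (hjk : j ≠ k) (h0 : 0 ≤ lam) (h3 : lam ≤ 3) :
    lam = 2 ∨ lam = 1 + √3 := by
  have hcubic := h.cubic_of_triple (distMatrix_self G) (distMatrix_isSymm G) hij hik hjk
  simp only [distMatrix_apply] at hcubic
  exact eq_two_or_eq_one_add_sqrt_three_of_cubic (hG.pos_dist_of_ne hij) (hG.pos_dist_of_ne hik)
    (hG.pos_dist_of_ne hjk) h0 h3 hcubic

lemma SimpleGraph.Connected.isNClique_of_isPosEigenOn (hG : G.Connected) {x : Fin n → ℝ}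
    {S : Finset (Fin n)} (h : IsPosEigenOn (distMatrix G) S 3 x) (hS : #S = 4) :
    G.IsNClique 4 S := by
  refine ⟨fun i hi j hj hij => ?_, hS⟩
  have := h.eq_one_of_eq_card_sub_one (distMatrix_self G) (fun _ _ => hG.one_le_distMatrix)
    (by rw [hS]; norm_num) hi hj hij
  rwa [distMatrix_apply, Nat.cast_eq_one, dist_eq_one_iff_adj] at this

lemma SimpleGraph.Connected.eq_of_mem_distParetoSet_of_le_three (hG : G.Connected)
    (h : lam ∈ distParetoSet G) (h3 : lam ≤ 3) :
    lam = 0 ∨ lam = 1 ∨ lam = 2 ∨ lam = 1 + √3 ∨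
      lam = 3 ∧ ((∃ u v, G.dist u v = 3) ∨ ∃ s, G.IsNClique 4 s) := by
  obtain ⟨x, hx⟩ := h
  have hS := hx.isPosEigenOn_support
  set S : Finset (Fin n) := {i | x i ≠ 0}
  have hne : S.Nonempty := by
    obtain ⟨i, hi⟩ := Function.ne_iff.1 hx.1
    exact ⟨i, by simpa [S] using hi⟩
  have hcard := hS.card_sub_one_le (distMatrix_self G) (fun _ _ => hG.one_le_distMatrix) hne
  have hcard4 : #S ≤ 4 := by
    have : (#S : ℝ) ≤ 4 := by linarith
    exact_mod_cast this
  have hcard0 := hne.card_pos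
  interval_cases hc : #S
  · exact .inl (hS.eq_zero_of_card_eq_one (distMatrix_self G) hc)
  · obtain ⟨i, j, hij, hSij⟩ := card_eq_two.1 hc
    rw [hSij] at hS
    have hlam : lam = G.dist i j := hS.eq_of_pair (distMatrix_self G) (distMatrix_isSymm G) hij
    have : G.dist i j ≤ 3 := by exact_mod_cast hlam ▸ h3
    have : 1 ≤ G.dist i j := hG.pos_dist_of_ne hij
    interval_cases hd : G.dist i j
    · simp [hlam]
    · simp [hlam]
    · exact .inr <| .inr <| .inr <| .inr ⟨by simp [hlam], .inl ⟨i, j, hd⟩⟩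
  · obtain ⟨i, j, k, hij, hik, hjk, hSijk⟩ := card_eq_three.1 hc
    rw [hSijk] at hS
    rcases hG.eq_two_or_eq_one_add_sqrt_three_of_isPosEigenOn hS hij hik hjk
      (by norm_num at hcard; linarith) h3 with h | h <;> simp [h]
  · have hlam : lam = 3 := by norm_num at hcard; linarith
    subst hlam
    exact .inr <| .inr <| .inr <| .inr ⟨rfl, .inr ⟨S, hG.isNClique_of_isPosEigenOn hS hc⟩⟩

lemma SimpleGraph.Connected.three_mem_distParetoSet_iff (hG : G.Connected) :
    3 ∈ distParetoSet G ↔ 4 ≤ G.cliqueNum ∨ 3 ≤ G.diam := by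
  rw [le_cliqueNum_iff_exists_isNClique, ← hG.exists_dist_eq_iff_le_diam]
  constructor
  · intro h
    have hs3 : √3 < 2 := by rw [Real.sqrt_lt' two_pos]; norm_num
    rcases hG.eq_of_mem_distParetoSet_of_le_three h le_rfl with h | h | h | h | ⟨-, h⟩
    iterate 3 norm_num at h
    · linarith
    · exact h.symm
  · rintro (⟨s, hs⟩ | ⟨u, v, huv⟩)
    · exact_mod_cast hs.natCast_mem_distParetoSet
    · have huv' : u ≠ v := by rintro rfl; simp at huv
      simpa [huv] using natCast_dist_mem_distParetoSet (G := G) huv'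

lemma SimpleGraph.Connected.setOf_mem_distParetoSet_lt_three (hG : G.Connected) (hG' : G ≠ ⊤) :
    {x ∈ distParetoSet G | x < 3} = {0, 1, 2, 1 + √3} := by
  have hs3 : 1 < √3 ∧ √3 < 2 := ⟨by rw [Real.lt_sqrt zero_le_one]; norm_num,
    by rw [Real.sqrt_lt' two_pos]; norm_num⟩
  obtain ⟨a, u, w, hau, huw, haw⟩ := hG.exists_adj_adj_dist_eq_two hG'
  ext lam
  constructor
  · rintro ⟨h, h3⟩
    rcases hG.eq_of_mem_distParetoSet_of_le_three h h3.le with h | h | h | h | ⟨h, -⟩ <;>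
      simp_all
  · have h0 : (0 : ℝ) ∈ distParetoSet G := by
      simpa using (isNClique_singleton.2 rfl : G.IsNClique (0 + 1) {a}).natCast_mem_distParetoSet
    have h1 : (1 : ℝ) ∈ distParetoSet G := by
      simpa [dist_eq_one_iff_adj.2 hau] using natCast_dist_mem_distParetoSet (G := G) hau.ne
    have h2 : (2 : ℝ) ∈ distParetoSet G := by
      have haw' : a ≠ w := by rintro rfl; simp at haw
      simpa [haw] using natCast_dist_mem_distParetoSet (G := G) haw'
    rintro (rfl | rfl | rfl | rfl)
    · exact ⟨h0, by norm_num⟩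
    · exact ⟨h1, by norm_num⟩
    · exact ⟨h2, by norm_num⟩
    · exact ⟨one_add_sqrt_three_mem_distParetoSet hau huw haw, by linarith⟩

lemma SimpleGraph.Connected.exists_three_le_mem_distParetoSet (hG : G.Connected) (hn : 4 ≤ n) :
    ∃ lam ∈ distParetoSet G, 3 ≤ lam := by
  have hrow : ∀ i, (n : ℝ) - 1 ≤ ∑ j, distMatrix G i j := fun i => by
    rw [← sum_erase_add _ _ (mem_univ i), distMatrix_self, add_zero]
    calc (n : ℝ) - 1 = ∑ j ∈ univ.erase i, (1 : ℝ) := by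
          simp [card_erase_of_mem, Nat.cast_pred (by omega : 0 < n)]
      _ ≤ _ := sum_le_sum fun j hj => hG.one_le_distMatrix (ne_of_mem_erase hj).symm
  -- test the Rayleigh quotient on the all-ones vector, whose row sums are at least `n - 1`
  obtain ⟨lam, hlam, hle⟩ := exists_isParetoEigenvalue_ge_rayleigh (distMatrix_isSymm G)
    (distMatrix_nonneg G) (v := fun _ => 1) (Function.ne_iff.2 ⟨⟨0, by omega⟩, one_ne_zero⟩)
  refine ⟨lam, hlam, le_trans ?_ hle⟩
  have hsum : (n : ℝ) * (n - 1) ≤ ∑ i, ∑ j, distMatrix G i j :=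
    calc (n : ℝ) * (n - 1) = ∑ _i : Fin n, ((n : ℝ) - 1) := by simp; ring
      _ ≤ _ := sum_le_sum fun i _ => hrow i
  have hv : (fun _ => (1 : ℝ)) ⬝ᵥ (fun _ => 1 : Fin n → ℝ) = n := by simp [dotProduct]
  have hDv : (fun _ => (1 : ℝ)) ⬝ᵥ distMatrix G *ᵥ (fun _ => 1) =
      ∑ i, ∑ j, distMatrix G i j := by
    simp [dotProduct, mulVec]
  have hn' : (4 : ℝ) ≤ n := by exact_mod_cast hn
  rw [hv, hDv, le_div_iff₀ (by linarith)]
  nlinarith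

end DistanceMatrix

theorem stmt14 (n : ℕ) (hn : 4 ≤ n) (G : SimpleGraph (Fin n)) (hG : G.Connected)
    (hnc : G ≠ ⊤) :
    ∃ μ5 : ℝ, IsKthSmallest (distParetoSet G) 5 μ5 ∧ 3 ≤ μ5 ∧
      (μ5 = 3 ↔ 4 ≤ G.cliqueNum ∨ 3 ≤ G.diam) := by
  have hs3 : 1 < √3 := by rw [Real.lt_sqrt zero_le_one]; norm_num
  have hcard : ({0, 1, 2, 1 + √3} : Set ℝ).ncard = 4 := by
    rw [Set.ncard_insert_of_notMem, Set.ncard_insert_of_notMem, Set.ncard_pair] <;>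
      norm_num <;> linarith
  obtain ⟨μ, hμ, h3, hiff⟩ := exists_isKthSmallest_of_ncard_lt (S := distParetoSet G)
    (setOf_isParetoEigenvalue_finite (distMatrix G)) (t := 3) (k := 5)
    (by rw [hG.setOf_mem_distParetoSet_lt_three hnc, hcard])
    (hG.exists_three_le_mem_distParetoSet hn)
  exact ⟨μ, hμ, h3, hiff.trans hG.three_mem_distParetoSet_iff⟩
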